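/- Let X be a closed subvariety of the torus T^m over k with ideal I ⊆ k[x_1^{±1}, ..., x_m^{±1}], and define trop(X) = {v ∈ ℝ^m : for every nonzero f ∈ I, the minimum of ⟨u, v⟩ over u ∈ supp(f) is attained by at least two distinct u}. For every x ∈ X^an and each i, the coordinate function x_i is a unit in k[X], so |x_i|_x > 0, and the map π : X^an → ℝ^m, x ↦ (−log|x_1|_x, ..., −log|x_m|_x), is well-defined and continuous. Then the image of π is exactly trop(X). -/

import Mathlib

open scoped BigOperators Classical

noncomputable section

/-- The extended real line `R̄ = ℝ ∪ {∞}`. -/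
abbrev Rbar : Type := WithTop ℝ

/-- The map `a ↦ exp (−a)`, sending `∞` to `0`. -/
def expNeg (t : Rbar) : ℝ := if h : t = ⊤ then 0 else Real.exp (-(t.untop h))

/-- The topology on `R̄` in which `ℝ` carries its usual topology and the completed rays
`(a, ∞]` are a basis of neighborhoods of `∞`; equivalently, the topology induced by the
injection `expNeg : R̄ → ℝ`, which is a homeomorphism onto `[0, ∞)`. -/
instance : TopologicalSpace Rbar := TopologicalSpace.induced expNeg inferInstance

/-- `−log r`, with `−log 0 = ∞`. -/
def negLog (r : ℝ) : Rbar := if r = 0 then ⊤ else (((-Real.log r : ℝ)) : Rbar)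

/-- `ν : K → ℝ ∪ {∞}` is a (nonarchimedean) valuation: `ν(0) = ∞`,
`ν(ab) = ν(a) + ν(b)`, and `ν(a + b) ≥ min (ν a) (ν b)`. -/
structure IsVal {K : Type} [Field K] (ν : K → Rbar) : Prop where
  map_zero : ν 0 = ⊤
  map_mul : ∀ a b : K, ν (a * b) = ν a + ν b
  min_le_add : ∀ a b : K, min (ν a) (ν b) ≤ ν (a + b)

/-- The valuation `ν` is nontrivial: `ν(K*) ≠ {0}`. -/
def IsNontrivialVal {K : Type} [Field K] (ν : K → Rbar) : Prop :=
  ∃ a : K, a ≠ 0 ∧ ν a ≠ 0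

/-- The trivial valuation on a field `k`: `ν(a) = 0` for `a ≠ 0` and `ν(0) = ∞`. -/
def nuTriv (k : Type) [Field k] : k → Rbar := fun a => if a = 0 then ⊤ else 0

/-- `K` is complete with respect to the valuation `ν`, i.e. with respect to the induced
nonarchimedean absolute value `expNeg ∘ ν`: every Cauchy sequence converges. -/
def VComplete {K : Type} [Field K] (ν : K → Rbar) : Prop :=
  ∀ s : ℕ → K,
    (∀ ε : ℝ, 0 < ε → ∃ N : ℕ, ∀ p ≥ N, ∀ q ≥ N, expNeg (ν (s p - s q)) < ε) →
    ∃ L : K, ∀ ε : ℝ, 0 < ε → ∃ N : ℕ, ∀ p ≥ N, expNeg (ν (s p - L)) < ε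

/-- A multiplicative seminorm on a commutative ring `A`: a nonnegative real-valued
function with `|0| = 0`, `|1| = 1`, `|fg| = |f|·|g|` and `|f + g| ≤ |f| + |g|`. -/
structure IsMultSeminorm {A : Type} [CommRing A] (p : A → ℝ) : Prop where
  nonneg : ∀ f, 0 ≤ p f
  map_zero : p 0 = 0
  map_one : p 1 = 1
  map_mul : ∀ f g, p (f * g) = p f * p g
  add_le : ∀ f g, p (f + g) ≤ p f + p g

/-- A seminorm on the `K`-algebra `A` is compatible with `ν` if `|a| = exp(−ν(a))` for
every scalar `a ∈ K`. -/
def Compat {K A : Type} [Field K] [CommRing A] [Algebra K A] (ν : K → Rbar) (p : A → ℝ) :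
    Prop :=
  ∀ a : K, p (algebraMap K A a) = expNeg (ν a)

/-- The analytification `X^an` of the affine variety `X = Spec A` over the complete
nonarchimedean field `(K, ν)`: the set of multiplicative seminorms on `A` compatible with
`ν`, topologized (as a subset of `A → ℝ` with the product topology) by the coarsest
topology making `x ↦ |f|_x` continuous for every `f ∈ A`. -/
def Xan (K A : Type) [Field K] [CommRing A] [Algebra K A] (ν : K → Rbar) : Set (A → ℝ) :=
  {p | IsMultSeminorm p ∧ Compat ν p}

/-- The analytification `X^an` over a trivially valued field `k`: the set of
multiplicative seminorms on `A` that are equal to `1` on `k*`, with the topology of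
pointwise convergence. -/
def XanTriv (k A : Type) [Field k] [CommRing A] [Algebra k A] : Set (A → ℝ) :=
  {p | IsMultSeminorm p ∧ ∀ a : k, a ≠ 0 → p (algebraMap k A a) = 1}

/-- The projection `π_ι : X^an → R̄^m` attached to the affine embedding `ι` given by the
generators `f 0, ..., f (m-1)` of `A`: `x ↦ (−log|f 0|_x, ..., −log|f (m-1)|_x)`. -/
def piIota {K A : Type} [Field K] [CommRing A] [Algebra K A] (ν : K → Rbar) {m : ℕ}
    (f : Fin m → A) (x : ↥(Xan K A ν)) : Fin m → Rbar :=
  fun i => negLog (x.1 (f i))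

/-- The projection `π_ι : X^an → R̄^m` for a trivially valued base field. -/
def piIotaTriv {k A : Type} [Field k] [CommRing A] [Algebra k A] {m : ℕ}
    (f : Fin m → A) (x : ↥(XanTriv k A)) : Fin m → Rbar :=
  fun i => negLog (x.1 (f i))

/-- The tropicalization `Trop(X, ι)` of the affine embedding `ι : X ↪ A^m` of
`X = Spec A` given by the generators `f` of `A`: the closure in `R̄^m` of the set of
coordinatewise valuations of the `K`-points of `X`. -/
def TropX {K A : Type} [Field K] [CommRing A] [Algebra K A] (ν : K → Rbar) {m : ℕ}
    (f : Fin m → A) : Set (Fin m → Rbar) :=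
  closure {v | ∃ φ : A →ₐ[K] K, v = fun i => ν (φ (f i))}

/-- The tropicalization `Trop(φ) : R̄^m → R̄^n` of the equivariant morphism
`φ : A^m → A^n` whose coordinates are `y_j ↦ c_j · x^{a_j}`, namely
`v ↦ (ν(c_1) + ⟨a_1, v⟩, ..., ν(c_n) + ⟨a_n, v⟩)`, with the conventions `ν(0) = ∞`,
`∞ + t = ∞`, `a_i · ∞ = ∞` for `a_i > 0`, and `0 · ∞ = 0`. -/
def tropMap {K : Type} [Field K] (ν : K → Rbar) {m n : ℕ} (c : Fin n → K)
    (a : Fin n → Fin m → ℕ) (v : Fin m → Rbar) : Fin n → Rbar :=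
  fun j => ν (c j) + ∑ i, (a j i) • v i

/-- The affine embeddings of `X = Spec A`: an embedding `ι : X ↪ A^m` is a tuple of
generators of `A` as a `K`-algebra. -/
def AffEmb (K A : Type) [Field K] [CommRing A] [Algebra K A] : Type :=
  Σ m : ℕ, {f : Fin m → A // Algebra.adjoin K (Set.range f) = ⊤}

/-- The map `X^an → Π_ι R̄^{m(ι)}`, `x ↦ (π_ι(x))_ι`, over all affine embeddings `ι`. -/
def bigMap (K A : Type) [Field K] [CommRing A] [Algebra K A] (ν : K → Rbar)
    (x : ↥(Xan K A ν)) : ∀ e : AffEmb K A, Fin e.1 → Rbar :=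
  fun e => piIota ν e.2.1 x

/-- The inverse limit `varprojlim Trop(X, ι)`, realized inside `Π_ι R̄^{m(ι)}`: families
`(y_ι)` with `y_ι ∈ Trop(X, ι)` for all `ι` and `y_ȷ = Trop(φ)(y_ι)` for every
equivariant morphism `φ : A^{m(ι)} → A^{m(ȷ)}` with `ȷ = φ ∘ ι`. -/
def limitSet (K A : Type) [Field K] [CommRing A] [Algebra K A] (ν : K → Rbar) :
    Set (∀ e : AffEmb K A, Fin e.1 → Rbar) :=
  {y | (∀ e : AffEmb K A, y e ∈ TropX ν e.2.1) ∧
    ∀ (e e' : AffEmb K A) (c : Fin e'.1 → K) (a : Fin e'.1 → Fin e.1 → ℕ),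
      (∀ j, e'.2.1 j = algebraMap K A (c j) * ∏ i, (e.2.1 i) ^ (a j i)) →
      y e' = tropMap ν c a (y e)}

/-- The ring of Laurent polynomials `K[x_1^{±1}, ..., x_m^{±1}]`, i.e. the group algebra
of `ℤ^m` over `K`. -/
abbrev Laur (K : Type) [Field K] (m : ℕ) : Type := AddMonoidAlgebra K (Fin m → ℤ)

/-- Evaluation of a Laurent polynomial at a point `y ∈ K^m` (meaningful when the
relevant coordinates of `y` are invertible). -/
def lEval {K : Type} [Field K] {m : ℕ} (y : Fin m → K) (g : Laur K m) : K :=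
  ∑ u ∈ g.coeff.support, g.coeff u * ∏ i, (y i) ^ (u i)

/-- The tropical minimum of the Laurent polynomial `f` at `v ∈ ℝ^m` is attained twice:
the minimum of `ν(a_u) + ⟨u, v⟩` over `u ∈ supp(f)` is achieved by at least two distinct
`u ∈ supp(f)`.  (Equivalently, the initial form of `f` at `v` is not a monomial.) -/
def MinTwice {K : Type} [Field K] {m : ℕ} (ν : K → Rbar) (f : Laur K m) (v : Fin m → ℝ) :
    Prop :=
  ∃ u ∈ f.coeff.support, ∃ u' ∈ f.coeff.support, u ≠ u' ∧
    ν (f.coeff u) + ((∑ i, (u i : ℝ) * v i : ℝ) : Rbar)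
      = ν (f.coeff u') + ((∑ i, (u' i : ℝ) * v i : ℝ) : Rbar) ∧
    ∀ w ∈ f.coeff.support,
      ν (f.coeff u) + ((∑ i, (u i : ℝ) * v i : ℝ) : Rbar)
        ≤ ν (f.coeff w) + ((∑ i, (w i : ℝ) * v i : ℝ) : Rbar)

/-- With the trivial valuation: the minimum of `⟨u, w⟩` over `supp g` is attained by at
least two distinct `u ∈ supp g`. -/
def MinTwiceTriv {k : Type} [Field k] {m : ℕ} (g : Laur k m) (w : Fin m → ℝ) : Prop :=
  ∃ u ∈ g.coeff.support, ∃ u' ∈ g.coeff.support, u ≠ u' ∧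
    (∑ i, (u i : ℝ) * w i) = (∑ i, (u' i : ℝ) * w i) ∧
    ∀ z ∈ g.coeff.support, (∑ i, (u i : ℝ) * w i) ≤ ∑ i, (z i : ℝ) * w i

/-- The tropicalization `T_trop(J)` of an ideal of Laurent polynomials: the set of
`v ∈ ℝ^m` such that for every nonzero `f ∈ J` the tropical minimum of `f` at `v` is
attained twice. -/
def Ttrop {K : Type} [Field K] {m : ℕ} (ν : K → Rbar) (J : Ideal (Laur K m)) :
    Set (Fin m → ℝ) :=
  {v | ∀ f ∈ J, f ≠ 0 → MinTwice ν f v}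

/-- The `K`-points of the closed subvariety of the torus `T^m` cut out by the ideal `I`:
points of `(K*)^m` at which every element of `I` vanishes. -/
def torusPoints {K : Type} [Field K] {m : ℕ} (I : Ideal (Laur K m)) :
    Set (Fin m → Kˣ) :=
  {y | ∀ f ∈ I, lEval (fun i => (y i : K)) f = 0}

/-- The real number `ν(a)` (with junk value `0` when `ν(a) = ∞`, i.e. when `a = 0`). -/
def vR {K : Type} [Field K] (ν : K → Rbar) (a : K) : ℝ := WithTop.untopD 0 (ν a)

/-- The set `{trop(y) : y ∈ X(K)} ⊆ ℝ^m` of coordinatewise valuations of the `K`-points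
of the closed subvariety of the torus cut out by `I`; `trop(X)` is its closure. -/
def tropImg {K : Type} [Field K] {m : ℕ} (ν : K → Rbar) (I : Ideal (Laur K m)) :
    Set (Fin m → ℝ) :=
  {w | ∃ y ∈ torusPoints I, w = fun i => vR ν ((y i : Kˣ) : K)}

/-- The `K`-points of the closed subvariety of `A^m` cut out by the ideal `J`. -/
def affPoints {K : Type} [Field K] {m : ℕ} (J : Ideal (MvPolynomial (Fin m) K)) :
    Set (Fin m → K) :=
  {y | ∀ f ∈ J, MvPolynomial.eval y f = 0}

/-- The extended tropicalization in `R̄^m` of a set of points of `A^m(K)`: the closure of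
the set of coordinatewise valuations. -/
def TropAff {K : Type} [Field K] {m : ℕ} (ν : K → Rbar) (S : Set (Fin m → K)) :
    Set (Fin m → Rbar) :=
  closure {v | ∃ y ∈ S, v = fun i => ν (y i)}

/-- The coefficientwise extension map
`k[x_1^{±1}, ..., x_m^{±1}] → K[x_1^{±1}, ..., x_m^{±1}]` along `algebraMap k K`. -/
def laurExt (k K : Type) [Field k] [Field K] [Algebra k K] (m : ℕ) :
    Laur k m →ₐ[k] Laur K m :=
  (AddMonoidAlgebra.lift k (Laur K m) (Fin m → ℤ)) (AddMonoidAlgebra.of K (Fin m → ℤ))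

/-- The `i`-th coordinate function `x_i` in the coordinate ring
`k[X] = k[x_1^{±1}, ..., x_m^{±1}] / I` of a closed subvariety of the torus. -/
def coordLaur {k : Type} [Field k] {m : ℕ} (I : Ideal (Laur k m)) (i : Fin m) :
    Laur k m ⧸ I :=
  Ideal.Quotient.mk I (AddMonoidAlgebra.single (Pi.single i (1 : ℤ)) (1 : k))

/-- The projection `π : X^an → ℝ^m`, `x ↦ (−log|x_1|_x, ..., −log|x_m|_x)`, for a closed
subvariety of the torus over a trivially valued field. -/
def piTorus {k : Type} [Field k] {m : ℕ} (I : Ideal (Laur k m))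
    (x : ↥(XanTriv k (Laur k m ⧸ I))) : Fin m → ℝ :=
  fun i => -Real.log (x.1 (coordLaur I i))

/-- `trop(X)` for a closed subvariety of the torus over a trivially valued field: the
set of `v ∈ ℝ^m` such that for every nonzero `f ∈ I` the minimum of `⟨u, v⟩` over
`supp f` is attained at least twice. -/
def tropTrivTorus {k : Type} [Field k] {m : ℕ} (I : Ideal (Laur k m)) :
    Set (Fin m → ℝ) :=
  {v | ∀ f ∈ I, f ≠ 0 → MinTwiceTriv f v}

/-- The vanishing ideal of `X ∩ T^{I₀}` for the affine embedding of `X = Spec A` given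
by generators `f`: Laurent polynomials in the variables `x_i`, `i ∈ I₀` (support
condition), vanishing at every `k`-point `y` of `X` with `y_i ≠ 0` iff `i ∈ I₀`. -/
def stratVanishing (k A : Type) [Field k] [CommRing A] [Algebra k A] {m : ℕ}
    (f : Fin m → A) (I0 : Finset (Fin m)) : Set (Laur k m) :=
  {g | (∀ u ∈ g.coeff.support, ∀ i, i ∉ I0 → u i = 0) ∧
    ∀ φ : A →ₐ[k] k, (∀ i, φ (f i) ≠ 0 ↔ i ∈ I0) → lEval (fun i => φ (f i)) g = 0}

/-- The extended tropicalization `Trop(X, ι) ⊆ R̄^m` over a trivially valued field: the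
union over `I₀ ⊆ {1, ..., m}` of the sets `trop(X ∩ T^{I₀})`, each embedded in the
stratum `ℝ^{I₀} = {v : v_i < ∞ iff i ∈ I₀}` (coordinates `∞` off `I₀`). -/
def TropStrat (k A : Type) [Field k] [CommRing A] [Algebra k A] {m : ℕ}
    (f : Fin m → A) : Set (Fin m → Rbar) :=
  {v | ∃ (I0 : Finset (Fin m)) (w : Fin m → ℝ),
        (v = fun i => if i ∈ I0 then ((w i : ℝ) : Rbar) else ⊤) ∧
        ∀ g ∈ stratVanishing k A f I0, g ≠ 0 → MinTwiceTriv g w}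

/-- The map `X^an → Π_ι R̄^{m(ι)}` over a trivially valued field. -/
def bigMapTriv (k A : Type) [Field k] [CommRing A] [Algebra k A]
    (x : ↥(XanTriv k A)) : ∀ e : AffEmb k A, Fin e.1 → Rbar :=
  fun e => piIotaTriv e.2.1 x

/-- The inverse limit `varprojlim Trop(X, ι)` over a trivially valued field, realized
inside `Π_ι R̄^{m(ι)}`. -/
def limitSetTriv (k A : Type) [Field k] [CommRing A] [Algebra k A] :
    Set (∀ e : AffEmb k A, Fin e.1 → Rbar) :=
  {y | (∀ e : AffEmb k A, y e ∈ TropStrat k A e.2.1) ∧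
    ∀ (e e' : AffEmb k A) (c : Fin e'.1 → k) (a : Fin e'.1 → Fin e.1 → ℕ),
      (∀ j, e'.2.1 j = algebraMap k A (c j) * ∏ i, (e.2.1 i) ^ (a j i)) →
      y e' = tropMap (nuTriv k) c a (y e)}


/-!
A point `x ∈ X^an` is a multiplicative seminorm bounded by `1` on the integers, hence
nonarchimedean. If `⟨·, π x⟩` had a unique minimum `u₀` on `supp f`, the monomial `x^{u₀}`
would strictly dominate the others and `|f|_x = exp (-⟨u₀, π x⟩) > 0`, impossible for `f ∈ I`.

Conversely, for `v ∈ trop(X)` the Gauss norm `|∑ aᵤ xᵘ| = max_{aᵤ ≠ 0} exp (-⟨u, v⟩)`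
induces a nonarchimedean quotient seminorm on `k[X]` with `|1| = 1`; this is where the
tropical condition enters. As in Berkovich's proof that the spectrum of a Banach ring is
nonempty (Zorn's lemma on power-multiplicative seminorms below it, plus the construction of
Bosch–Güntzer–Remmert 1.3.2/2), it dominates a multiplicative seminorm. Since `xᵘ · x⁻ᵘ = 1`
and both factors are bounded by their weights, that seminorm equals `exp (-⟨u, v⟩)` on every
monomial, so it is a point of `X^an` over `v`.
-/

lemma IsChain.exists_le_le {α : Type*} [Preorder α] {c : Set α} (hc : IsChain (· ≤ ·) c)
    {p q : α} (hp : p ∈ c) (hq : q ∈ c) : ∃ r ∈ c, r ≤ p ∧ r ≤ q :=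
  (hc.total hp hq).elim (fun h => ⟨p, hp, le_rfl, h⟩) fun h => ⟨q, hq, h, le_rfl⟩

namespace RingSeminorm

variable {R : Type*} [CommRing R]

instance : PartialOrder (RingSeminorm R) := PartialOrder.lift _ DFunLike.coe_injective

section iInfOfChain

variable (c : Set (RingSeminorm R)) (hc : IsChain (· ≤ ·) c)

lemma bddBelow_range_apply (x : R) : BddBelow (Set.range fun q : c => q.1 x) :=
  ⟨0, by rintro _ ⟨q, rfl⟩; exact apply_nonneg q.1 x⟩

variable [Nonempty c]

def iInfOfChain : RingSeminorm R where
  toFun x := ⨅ q : c, q.1 x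
  map_zero' := by simp
  add_le' x y := by
    refine le_ciInf_add_ciInf fun q₁ q₂ => ?_
    obtain ⟨q, hq, hq₁, hq₂⟩ := hc.exists_le_le q₁.2 q₂.2
    calc ⨅ q : c, q.1 (x + y) ≤ q (x + y) := ciInf_le (bddBelow_range_apply c _) ⟨q, hq⟩
      _ ≤ q x + q y := map_add_le_add q x y
      _ ≤ q₁.1 x + q₂.1 y := add_le_add (hq₁ x) (hq₂ y)
  neg' x := by simp
  mul_le' x y := by
    have hy : 0 ≤ ⨅ q : c, q.1 y := Real.iInf_nonneg fun q => apply_nonneg q.1 y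
    rw [Real.iInf_mul_of_nonneg hy]
    refine le_ciInf fun q₁ => ?_
    rw [Real.mul_iInf_of_nonneg (apply_nonneg q₁.1 x)]
    refine le_ciInf fun q₂ => ?_
    obtain ⟨q, hq, hq₁, hq₂⟩ := hc.exists_le_le q₁.2 q₂.2
    calc ⨅ q : c, q.1 (x * y) ≤ q (x * y) := ciInf_le (bddBelow_range_apply c _) ⟨q, hq⟩
      _ ≤ q x * q y := map_mul_le_mul q x y
      _ ≤ q₁.1 x * q₂.1 y :=
        mul_le_mul (hq₁ x) (hq₂ y) (apply_nonneg q y) (apply_nonneg q₁.1 x)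

lemma iInfOfChain_apply (x : R) : iInfOfChain c hc x = ⨅ q : c, q.1 x := rfl

lemma iInfOfChain_le {q : RingSeminorm R} (hq : q ∈ c) : iInfOfChain c hc ≤ q :=
  fun x => ciInf_le (bddBelow_range_apply c x) ⟨q, hq⟩

lemma isPowMul_iInfOfChain (h : ∀ q ∈ c, IsPowMul q) : IsPowMul (iInfOfChain c hc) := by
  intro x n hn
  -- `t ↦ max t 0 ^ n` extends `t ↦ tⁿ` from `[0, ∞)` monotonically, so it commutes with `⨅`
  have hmono : Monotone fun t : ℝ => max t 0 ^ n := fun s t hst =>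
    pow_le_pow_left₀ (le_max_right _ _) (max_le_max_right 0 hst) n
  have hcont : Continuous fun t : ℝ => max t 0 ^ n := by fun_prop
  have key := hmono.map_ciInf_of_continuousAt hcont.continuousAt (bddBelow_range_apply c x)
  have hx : 0 ≤ ⨅ q : c, q.1 x := Real.iInf_nonneg fun q => apply_nonneg q.1 x
  simp only [max_eq_left (apply_nonneg _ _), max_eq_left hx] at key
  simp only [iInfOfChain_apply, key, h _ (Subtype.prop _) x hn]

end iInfOfChain

def powMulBelow (μ : RingSeminorm R) : Set (RingSeminorm R) :=
  {q | q 1 = 1 ∧ IsPowMul q ∧ q ≤ μ}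

-- If `q c ≠ 0`, `seminormFromConst` (BGR 1.3.2/2) is an element of `powMulBelow μ` below `q`
-- for which `c` is multiplicative; by minimality it is `q` itself.
lemma map_mul_of_minimal {μ q : RingSeminorm R} (hq : Minimal (· ∈ powMulBelow μ) q) (c x : R) :
    q (c * x) = q c * q x := by
  obtain ⟨⟨h1, hpm, hle⟩, hmin⟩ := hq
  by_cases hc : q c = 0
  · rw [hc, zero_mul]
    exact le_antisymm ((map_mul_le_mul q c x).trans (by rw [hc, zero_mul])) (apply_nonneg q _)
  · have hq'le : seminormFromConst h1.le hc hpm ≤ q :=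
      seminormFromConst_le_seminorm h1.le hc hpm
    have hq' : seminormFromConst h1.le hc hpm ∈ powMulBelow μ :=
      ⟨seminormFromConst_one h1.le hc hpm, seminormFromConst_isPowMul h1.le hc hpm,
        hq'le.trans hle⟩
    have heq : ∀ y, seminormFromConst' c q y = q y := fun y =>
      le_antisymm (hq'le y) (hmin hq' hq'le y)
    simpa only [heq] using seminormFromConst_const_mul h1.le hc hpm x

lemma smoothingSeminorm_mem_powMulBelow {μ : RingSeminorm R} (hμ1 : μ 1 = 1)
    (hna : IsNonarchimedean μ) : smoothingSeminorm μ hμ1.le hna ∈ powMulBelow μ := by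
  refine ⟨?_, isPowMul_smoothingFun μ hμ1.le, smoothingFun_le_self μ⟩
  rw [smoothingSeminorm_apply_of_map_mul_eq_mul μ hμ1.le hna (by simp [hμ1]), hμ1]

lemma iInfOfChain_mem_powMulBelow {μ : RingSeminorm R} {c : Set (RingSeminorm R)}
    (hcS : c ⊆ powMulBelow μ) (hc : IsChain (· ≤ ·) c) [Nonempty c] :
    iInfOfChain c hc ∈ powMulBelow μ := by
  obtain ⟨q, hq⟩ := Classical.arbitrary c
  refine ⟨?_, isPowMul_iInfOfChain c hc fun p hp => (hcS hp).2.1,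
    (iInfOfChain_le c hc hq).trans (hcS hq).2.2⟩
  simp only [iInfOfChain_apply, fun p : c => (hcS p.2).1, ciInf_const]

theorem exists_minimal_powMulBelow {μ : RingSeminorm R} (hμ1 : μ 1 = 1)
    (hna : IsNonarchimedean μ) : ∃ q, Minimal (· ∈ powMulBelow μ) q := by
  obtain ⟨q, -, hq⟩ := zorn_le_nonempty₀ (α := (RingSeminorm R)ᵒᵈ) (powMulBelow μ)
    (fun c hcS hc q hq => by
      have : Nonempty (Set.Elem (α := RingSeminorm R) c) := ⟨⟨q, hq⟩⟩
      exact ⟨_, iInfOfChain_mem_powMulBelow hcS hc.symm, fun p hp => iInfOfChain_le c hc.symm hp⟩)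
    _ (smoothingSeminorm_mem_powMulBelow hμ1 hna)
  exact ⟨q, hq⟩

theorem exists_map_mul_le {μ : RingSeminorm R} (hμ1 : μ 1 = 1) (hna : IsNonarchimedean μ) :
    ∃ q : RingSeminorm R, q 1 = 1 ∧ (∀ x y, q (x * y) = q x * q y) ∧ q ≤ μ := by
  obtain ⟨q, hq⟩ := exists_minimal_powMulBelow hμ1 hna
  exact ⟨q, hq.1.1, map_mul_of_minimal hq, hq.1.2.2⟩

end RingSeminorm

lemma le_of_forall_pow_le_mul_pow {a b : ℝ} (hb : 0 ≤ b)
    (h : ∀ n : ℕ, a ^ n ≤ (n + 1) * b ^ n) : a ≤ b := by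
  by_contra! hba
  rcases hb.eq_or_lt with rfl | hb
  · have h1 := h 1
    norm_num at h1
    linarith
  obtain ⟨n, hn⟩ := Real.exists_natCast_add_one_lt_pow_of_one_lt ((one_lt_div hb).2 hba)
  rw [div_pow, lt_div_iff₀ (by positivity)] at hn
  exact (h n).not_gt hn

namespace IsMultSeminorm

variable {A : Type} [CommRing A] {p : A → ℝ}

lemma map_pow (hp : IsMultSeminorm p) (x : A) (n : ℕ) : p (x ^ n) = p x ^ n := by
  induction n with
  | zero => simp [hp.map_one]
  | succ n ih => rw [pow_succ, hp.map_mul, ih, pow_succ]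

lemma map_neg (hp : IsMultSeminorm p) (x : A) : p (-x) = p x := by
  have h : p (-1) ^ 2 = 1 := by rw [← hp.map_pow, neg_one_sq, hp.map_one]
  have h1 : p (-1) = 1 := by
    rwa [pow_eq_one_iff_of_nonneg (hp.nonneg _) two_ne_zero] at h
  rw [neg_eq_neg_one_mul, hp.map_mul, h1, one_mul]

theorem isNonarchimedean (hp : IsMultSeminorm p) (hn : ∀ n : ℕ, p n ≤ 1) :
    IsNonarchimedean p := by
  intro x y
  set M := max (p x) (p y)
  have hM : 0 ≤ M := (hp.nonneg x).trans (le_max_left _ _)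
  refine le_of_forall_pow_le_mul_pow hM fun n => ?_
  have hterm : ∀ i ∈ Finset.range (n + 1),
      p (x ^ i * y ^ (n - i) * (n.choose i : A)) ≤ M ^ n := fun i hi => by
    rw [hp.map_mul, hp.map_mul, hp.map_pow, hp.map_pow]
    calc p x ^ i * p y ^ (n - i) * p (n.choose i : A) ≤ M ^ i * M ^ (n - i) * 1 := by
          refine mul_le_mul (mul_le_mul ?_ ?_ (pow_nonneg (hp.nonneg y) _) (pow_nonneg hM _))
            (hn _) (hp.nonneg _) (mul_nonneg (pow_nonneg hM _) (pow_nonneg hM _))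
          · exact pow_le_pow_left₀ (hp.nonneg x) (le_max_left _ _) i
          · exact pow_le_pow_left₀ (hp.nonneg y) (le_max_right _ _) _
      _ = M ^ n := by
          rw [mul_one, ← pow_add, Nat.add_sub_cancel' (Finset.mem_range_succ_iff.1 hi)]
  calc p (x + y) ^ n = p ((x + y) ^ n) := (hp.map_pow _ n).symm
    _ ≤ ∑ i ∈ Finset.range (n + 1), p (x ^ i * y ^ (n - i) * (n.choose i : A)) := by
        rw [add_pow]
        exact Finset.le_sum_of_subadditive p hp.map_zero.le hp.add_le _ _
    _ ≤ (n + 1) * M ^ n := by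
        simpa using Finset.sum_le_sum hterm

lemma pos_of_isUnit (hp : IsMultSeminorm p) {a : A} (ha : IsUnit a) : 0 < p a := by
  obtain ⟨b, hab⟩ := ha.exists_right_inv
  have h1 : p a * p b = 1 := by rw [← hp.map_mul, hab, hp.map_one]
  refine (hp.nonneg a).lt_of_ne fun h => ?_
  rw [← h, zero_mul] at h1
  exact zero_ne_one h1

lemma eq_of_mul_eq_one {a b : A} (hp : IsMultSeminorm p) (hab : a * b = 1) {s : ℝ} (hs : 0 < s)
    (ha : p a ≤ s) (hb : p b ≤ s⁻¹) : p a = s := by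
  refine le_antisymm ha ?_
  have h1 : 1 ≤ p a * s⁻¹ := by
    calc (1 : ℝ) = p a * p b := by rw [← hp.map_mul, hab, hp.map_one]
      _ ≤ p a * s⁻¹ := mul_le_mul_of_nonneg_left hb (hp.nonneg a)
  rwa [← div_eq_mul_inv, one_le_div hs] at h1

end IsMultSeminorm

namespace RingSeminorm

variable {R : Type*} [CommRing R] (N : RingSeminorm R) (I : Ideal R)

instance (x : R ⧸ I) : Nonempty {g : R // Ideal.Quotient.mk I g = x} :=
  let ⟨g, hg⟩ := Ideal.Quotient.mk_surjective x
  ⟨⟨g, hg⟩⟩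

lemma bddBelow_range_apply_rep (x : R ⧸ I) :
    BddBelow (Set.range fun g : {g : R // Ideal.Quotient.mk I g = x} => N g) :=
  ⟨0, by rintro _ ⟨g, rfl⟩; exact apply_nonneg N _⟩

def quotient : RingSeminorm (R ⧸ I) where
  toFun x := ⨅ g : {g : R // Ideal.Quotient.mk I g = x}, N g
  map_zero' := le_antisymm
    ((ciInf_le (bddBelow_range_apply_rep N I 0) ⟨0, map_zero _⟩).trans_eq (map_zero N))
    (Real.iInf_nonneg fun g => apply_nonneg N _)
  add_le' x y := le_ciInf_add_ciInf fun g h =>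
    (ciInf_le (bddBelow_range_apply_rep N I _) ⟨g + h, by rw [map_add, g.2, h.2]⟩).trans
      (map_add_le_add N _ _)
  neg' x := by
    have key : ∀ x : R ⧸ I, ⨅ g : {g : R // Ideal.Quotient.mk I g = -x}, N g ≤
        ⨅ g : {g : R // Ideal.Quotient.mk I g = x}, N g := fun x =>
      le_ciInf fun g => (ciInf_le (bddBelow_range_apply_rep N I _)
        ⟨-g, by rw [map_neg, g.2]⟩).trans_eq (map_neg_eq_map N _)
    have key' := key (-x)
    rw [neg_neg] at key'
    exact le_antisymm (key x) key'
  mul_le' x y := by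
    have hy : 0 ≤ ⨅ g : {g : R // Ideal.Quotient.mk I g = y}, N g :=
      Real.iInf_nonneg fun g => apply_nonneg N _
    rw [Real.iInf_mul_of_nonneg hy]
    refine le_ciInf fun g => ?_
    rw [Real.mul_iInf_of_nonneg (apply_nonneg N _)]
    exact le_ciInf fun h => (ciInf_le (bddBelow_range_apply_rep N I _)
      ⟨g * h, by rw [map_mul, g.2, h.2]⟩).trans (map_mul_le_mul N _ _)

variable {N I}

lemma quotient_mk_le (g : R) : N.quotient I (Ideal.Quotient.mk I g) ≤ N g :=
  ciInf_le (bddBelow_range_apply_rep N I _) ⟨g, rfl⟩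

lemma le_quotient {x : R ⧸ I} {b : ℝ} (h : ∀ g, Ideal.Quotient.mk I g = x → b ≤ N g) :
    b ≤ N.quotient I x :=
  le_ciInf fun g => h g.1 g.2

lemma isNonarchimedean_quotient (hna : IsNonarchimedean N) :
    IsNonarchimedean (N.quotient I) := by
  intro x y
  by_contra! hlt
  obtain ⟨g, hg⟩ := exists_lt_of_ciInf_lt (lt_of_le_of_lt (le_max_left _ _) hlt)
  obtain ⟨h, hh⟩ := exists_lt_of_ciInf_lt (lt_of_le_of_lt (le_max_right _ _) hlt)
  have hgh : N.quotient I (x + y) ≤ N (g.1 + h.1) := by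
    have hmk : Ideal.Quotient.mk I (g.1 + h.1) = x + y := by rw [map_add, g.2, h.2]
    exact hmk ▸ quotient_mk_le _
  exact (hgh.trans (hna _ _)).not_gt (max_lt hg hh)

end RingSeminorm

namespace AddMonoidAlgebra

variable {R G : Type*} [Ring R] [AddMonoid G] (w : G →+ ℝ)

def expWeight (u : G) : NNReal := ⟨Real.exp (-w u), (Real.exp_pos _).le⟩

lemma expWeight_add (u u' : G) : expWeight w (u + u') = expWeight w u * expWeight w u' := by
  apply NNReal.eq
  simp only [expWeight, map_add, neg_add, Real.exp_add]
  rfl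

def gaussNorm : RingSeminorm (AddMonoidAlgebra R G) where
  toFun f := ((f.supDegree (expWeight w) : NNReal) : ℝ)
  map_zero' := by simp
  add_le' f g := by
    exact_mod_cast supDegree_add_le.trans (sup_le le_self_add le_add_self)
  neg' f := by simp
  mul_le' f g := by
    norm_cast
    refine Finset.sup_le fun u hu => ?_
    obtain ⟨a, ha, b, hb, rfl⟩ := Finset.mem_add.1 (support_coeff_mul_subset f g hu)
    rw [expWeight_add]
    exact mul_le_mul' (Finset.le_sup ha) (Finset.le_sup hb)

variable {w}

lemma gaussNorm_apply (f : AddMonoidAlgebra R G) :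
    gaussNorm w f = f.supDegree (expWeight w) :=
  rfl

lemma exp_le_gaussNorm {f : AddMonoidAlgebra R G} {u : G} (hu : u ∈ f.coeff.support) :
    Real.exp (-w u) ≤ gaussNorm w f :=
  NNReal.coe_le_coe.2 (Finset.le_sup (f := expWeight w) hu)

lemma gaussNorm_single (u : G) {r : R} (hr : r ≠ 0) :
    gaussNorm w (single u r) = Real.exp (-w u) := by
  rw [gaussNorm_apply, supDegree_single_ne_zero u hr]
  rfl

lemma gaussNorm_one [Nontrivial R] : gaussNorm w (1 : AddMonoidAlgebra R G) = 1 := by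
  rw [one_def, gaussNorm_single 0 one_ne_zero, map_zero, neg_zero, Real.exp_zero]

lemma isNonarchimedean_gaussNorm : IsNonarchimedean (gaussNorm w : AddMonoidAlgebra R G → ℝ) :=
  fun f g => by simp only [gaussNorm_apply]; exact_mod_cast supDegree_add_le

end AddMonoidAlgebra

section Torus

open AddMonoidAlgebra

variable {k : Type} [Field k] {m : ℕ}

def pairing (v : Fin m → ℝ) : (Fin m → ℤ) →+ ℝ where
  toFun u := ∑ i, (u i : ℝ) * v i
  map_zero' := by simp
  map_add' u u' := by simp [add_mul, Finset.sum_add_distrib]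

lemma pairing_single (v : Fin m → ℝ) (i : Fin m) (z : ℤ) :
    pairing v (Pi.single i z) = z * v i := by
  simp [pairing, Pi.single_apply]

variable (I : Ideal (Laur k m))

lemma algebraMap_eq_mk_single (a : k) :
    algebraMap k (Laur k m ⧸ I) a = Ideal.Quotient.mk I (single 0 a) := by
  rfl

lemma mk_single_eq_algebraMap_mul (u : Fin m → ℤ) (a : k) :
    Ideal.Quotient.mk I (single u a) = algebraMap k _ a * Ideal.Quotient.mk I (single u 1) := by
  rw [algebraMap_eq_mk_single, ← map_mul, single_mul_single, zero_add, mul_one]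

lemma isUnit_mk_single (u : Fin m → ℤ) : IsUnit (Ideal.Quotient.mk I (single u (1 : k))) :=
  IsUnit.of_mul_eq_one (Ideal.Quotient.mk I (single (-u) 1)) <| by
    rw [← map_mul, single_mul_single, add_neg_cancel, mul_one, ← one_def, map_one]

lemma isUnit_coordLaur (i : Fin m) : IsUnit (coordLaur I i) :=
  isUnit_mk_single I _

variable {I}

lemma apply_algebraMap_le_one {A : Type} [CommRing A] [Algebra k A] {p : A → ℝ}
    (hp : p ∈ XanTriv k A) (a : k) : p (algebraMap k A a) ≤ 1 := by
  rcases eq_or_ne a 0 with rfl | ha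
  · rw [map_zero, hp.1.map_zero]; exact zero_le_one
  · exact (hp.2 a ha).le

-- `u ↦ log |xᵘ|` is additive on `ℤᵐ`, hence determined by its values `-vᵢ` on the basis
lemma apply_mk_single (x : XanTriv k (Laur k m ⧸ I)) (u : Fin m → ℤ) {a : k} (ha : a ≠ 0) :
    x.1 (Ideal.Quotient.mk I (single u a)) = Real.exp (-pairing (piTorus I x) u) := by
  obtain ⟨hp, hk⟩ := x.2
  have hpos : ∀ u, 0 < x.1 (Ideal.Quotient.mk I (single u 1)) := fun u =>
    hp.pos_of_isUnit (isUnit_mk_single I u)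
  let L : (Fin m → ℤ) →+ ℝ :=
    { toFun u := Real.log (x.1 (Ideal.Quotient.mk I (single u 1)))
      map_zero' := by rw [← one_def, map_one, hp.map_one, Real.log_one]
      map_add' u u' := by
        rw [show single (u + u') (1 : k) = single u 1 * single u' 1 by
            rw [single_mul_single, one_mul], map_mul, hp.map_mul,
          Real.log_mul (hpos u).ne' (hpos u').ne'] }
  have hL : L = -pairing (piTorus I x) := by
    ext i
    simp [L, pairing_single, piTorus, coordLaur]
  rw [mk_single_eq_algebraMap_mul, hp.map_mul, hk a ha, one_mul, ← AddMonoidHom.neg_apply,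
    ← hL]
  exact (Real.exp_log (hpos u)).symm

theorem piTorus_mem_tropTrivTorus (x : XanTriv k (Laur k m ⧸ I)) :
    piTorus I x ∈ tropTrivTorus I := by
  intro f hfI hf0
  set v := piTorus I x
  have hp := x.2.1
  have hna : IsNonarchimedean x.1 := hp.isNonarchimedean fun n => by
    simpa only [map_natCast] using apply_algebraMap_le_one x.2 (n : k)
  obtain ⟨u₀, hu₀, hmin⟩ := f.coeff.support.exists_min_image (pairing v)
    (Finsupp.support_nonempty_iff.2 fun h => hf0 (coeff_injective (by simpa using h)))
  by_contra htwice
  have hlt : ∀ u ∈ f.coeff.support, u ≠ u₀ → pairing v u₀ < pairing v u := fun u hu hne =>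
    (hmin u hu).lt_of_ne fun heq => htwice ⟨u₀, hu₀, u, hu, hne.symm, heq, hmin⟩
  have hf : x.1 (Ideal.Quotient.mk I f) = Real.exp (-pairing v u₀) := by
    conv_lhs => rw [← sum_coeff_single f, Finsupp.sum, map_sum]
    rw [IsNonarchimedean.apply_sum_eq_of_lt hna (fun a => (hp.map_neg a).symm) hu₀
      fun u hu hne => ?_]
    · exact apply_mk_single x u₀ (Finsupp.mem_support_iff.1 hu₀)
    · rw [apply_mk_single x u (Finsupp.mem_support_iff.1 hu),
        apply_mk_single x u₀ (Finsupp.mem_support_iff.1 hu₀), Real.exp_lt_exp, neg_lt_neg_iff]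
      exact hlt u hu hne
  rw [Ideal.Quotient.eq_zero_iff_mem.2 hfI, hp.map_zero] at hf
  exact (Real.exp_pos _).ne hf

-- if `g ≡ 1 mod I` had all monomials of weight `< 1`, then `⟨0, v⟩ = 0` would be the unique
-- minimum of `⟨·, v⟩` on `supp (g - 1)`
lemma one_le_gaussNorm_of_sub_one_mem {v : Fin m → ℝ} (hv : v ∈ tropTrivTorus I) {g : Laur k m}
    (hg : g - 1 ∈ I) : 1 ≤ gaussNorm (pairing v) g := by
  by_contra! hlt
  have hpos : ∀ u ∈ g.coeff.support, 0 < pairing v u := fun u hu => by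
    have := (exp_le_gaussNorm hu).trans_lt hlt
    rwa [Real.exp_lt_one_iff, neg_lt_zero] at this
  have hcoeff : ∀ u, u ≠ 0 → (g - 1).coeff u = g.coeff u := fun u hu => by
    simp [coeff_sub, one_def, hu.symm]
  have hcoeff0 : (g - 1).coeff 0 = -1 := by
    have : g.coeff 0 = 0 :=
      Finsupp.notMem_support_iff.1 fun h => (hpos 0 h).ne (map_zero _).symm
    simp [coeff_sub, one_def, this]
  have h0 : (0 : Fin m → ℤ) ∈ (g - 1).coeff.support :=
    Finsupp.mem_support_iff.2 (by rw [hcoeff0]; norm_num)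
  obtain ⟨u, hu, u', hu', hne, heq, hmin⟩ :=
    hv (g - 1) hg fun h => by simp [h] at hcoeff0
  have hzero : ∀ w ∈ (g - 1).coeff.support, pairing v w ≤ 0 → w = 0 := fun w hw hle => by
    by_contra hw0
    rw [Finsupp.mem_support_iff, hcoeff w hw0, ← Finsupp.mem_support_iff] at hw
    exact (hpos w hw).not_ge hle
  have hule : pairing v u ≤ 0 := (hmin 0 h0).trans_eq (map_zero (pairing v))
  have hu'le : pairing v u' ≤ 0 := heq.symm.le.trans hule
  exact hne ((hzero u hu hule).trans (hzero u' hu' hu'le).symm)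

lemma quotient_gaussNorm_one {v : Fin m → ℝ} (hv : v ∈ tropTrivTorus I) :
    (gaussNorm (pairing v)).quotient I 1 = 1 :=
  le_antisymm
    ((map_one (Ideal.Quotient.mk I) ▸ RingSeminorm.quotient_mk_le 1).trans_eq gaussNorm_one)
    (RingSeminorm.le_quotient fun g hg =>
      one_le_gaussNorm_of_sub_one_mem hv (by rw [← Ideal.Quotient.eq, hg, map_one]))

theorem exists_piTorus_eq {v : Fin m → ℝ} (hv : v ∈ tropTrivTorus I) :
    ∃ x : XanTriv k (Laur k m ⧸ I), piTorus I x = v := by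
  obtain ⟨q, hq1, hqmul, hqle⟩ := RingSeminorm.exists_map_mul_le (quotient_gaussNorm_one hv)
    (RingSeminorm.isNonarchimedean_quotient isNonarchimedean_gaussNorm)
  have hq : IsMultSeminorm q := ⟨apply_nonneg q, map_zero q, hq1, hqmul, map_add_le_add q⟩
  have hbound : ∀ u {a : k}, a ≠ 0 →
      q (Ideal.Quotient.mk I (single u a)) ≤ Real.exp (-pairing v u) := fun u a ha =>
    (hqle _).trans ((RingSeminorm.quotient_mk_le _).trans_eq (gaussNorm_single u ha))
  have hmonomial : ∀ u {a : k}, a ≠ 0 →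
      q (Ideal.Quotient.mk I (single u a)) = Real.exp (-pairing v u) := fun u a ha =>
    hq.eq_of_mul_eq_one
      (by rw [← map_mul, single_mul_single, add_neg_cancel, mul_inv_cancel₀ ha, ← one_def,
        map_one])
      (Real.exp_pos _) (hbound u ha)
      (by rw [← Real.exp_neg, ← map_neg]; exact hbound (-u) (inv_ne_zero ha))
  refine ⟨⟨q, hq, fun a ha => ?_⟩, funext fun i => ?_⟩
  · rw [algebraMap_eq_mk_single, hmonomial 0 ha, map_zero, neg_zero, Real.exp_zero]
  · simp [piTorus, coordLaur, hmonomial _ one_ne_zero, pairing_single]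

end Torus

theorem stmt10_general {k : Type} [Field k]
    (m : ℕ) (I : Ideal (Laur k m)) :
    (∀ i : Fin m, IsUnit (coordLaur I i)) ∧
      (∀ x : ↥(XanTriv k (Laur k m ⧸ I)), ∀ i : Fin m, 0 < x.1 (coordLaur I i)) ∧
      Continuous (piTorus I) ∧
      Set.range (piTorus I) = tropTrivTorus I := by
  have hpos : ∀ (x : XanTriv k (Laur k m ⧸ I)) i, 0 < x.1 (coordLaur I i) := fun x i =>
    x.2.1.pos_of_isUnit (isUnit_coordLaur I i)
  refine ⟨isUnit_coordLaur I, hpos, ?_, ?_⟩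
  · exact continuous_pi fun i =>
      (((continuous_apply _).comp continuous_subtype_val).log fun x => (hpos x i).ne').neg
  · ext v
    exact ⟨by rintro ⟨x, rfl⟩; exact piTorus_mem_tropTrivTorus x, exists_piTorus_eq⟩

/-- Proposition 5.2.  Over an algebraically closed field `k` with the
trivial valuation, let `X ⊆ T^m` be cut out by the radical ideal `I`, with coordinate
ring `k[X] = k[x_1^{±1}, ..., x_m^{±1}] / I`.  Each coordinate function `x_i` is a unit
in `k[X]`, every `x ∈ X^an` satisfies `|x_i|_x > 0` (so the map
`π : X^an → ℝ^m`, `x ↦ (−log|x_1|_x, ..., −log|x_m|_x)`, is well-defined), `π` is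
continuous, and the image of `π` is exactly `trop(X)`. -/
theorem stmt10 {k : Type} [Field k] [IsAlgClosed k]
    (m : ℕ) (I : Ideal (Laur k m)) (hrad : I.IsRadical) :
    (∀ i : Fin m, IsUnit (coordLaur I i)) ∧
      (∀ x : ↥(XanTriv k (Laur k m ⧸ I)), ∀ i : Fin m, 0 < x.1 (coordLaur I i)) ∧
      Continuous (piTorus I) ∧
      Set.range (piTorus I) = tropTrivTorus I :=
  stmt10_general m I

end
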